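/- arXiv:1712.01372 — 2 statements merged into one kernel-verified Lean document; each statement's English description precedes it below -/
import Mathlib

section
/- Let K be a non-archimedean valued field and let {γ_j}_{j∈J} be a net of points of K indexed by a directed set J. Let ξ = ζ_{a,t} be the sup-seminorm over the closed disc D̄(a,t) with t > 0 (a type II or III point of the Berkovich affine line). Then γ_j → ξ in the Berkovich topology (i.e., |P(γ_j)| → |P|_ξ for every polynomial P ∈ K[z]) if and only if: (1) lim_j |γ_j − c| = t for every c ∈ D̄(a,t) (condition on finite tangent directions); and (2) lim_j t_j = t, where t_j := min{τ > 0 : ζ_{a,t} ∈ D̄(γ_j, τ)} = max(|γ_j − a|, t). -/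
open Filter

/-- The seminorm `|P|_{ζ_{a,t}}` of the point `ζ_{a,t}` of the Berkovich affine line:
for `P = Σ c_k (z-a)^k`, `|P|_{ζ_{a,t}} = max_k ‖c_k‖ t^k`. -/
noncomputable def berkNorm {K : Type*} [NormedField K] (a : K) (t : ℝ) (P : Polynomial K) :
    ℝ :=
  (Finset.range (P.natDegree + 1)).sup'
    (Finset.nonempty_range_iff.mpr (Nat.succ_ne_zero _))
    (fun k => ‖(Polynomial.taylor a P).coeff k‖ * t ^ k)

namespace BerkAux

open Polynomial

variable {K : Type*} [NontriviallyNormedField K] [IsUltrametricDist K]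

variable (a : K) (t : ℝ)

lemma term_le (ht : 0 < t) (P : K[X]) (k : ℕ) :
    ‖(taylor a P).coeff k‖ * t ^ k ≤ berkNorm a t P := by
  by_cases hk : k ≤ P.natDegree
  · exact Finset.le_sup' (f := fun k => ‖(Polynomial.taylor a P).coeff k‖ * t ^ k)
      (Finset.mem_range.mpr (Nat.lt_succ_of_le hk))
  · have h0 : (taylor a P).coeff k = 0 :=
      coeff_eq_zero_of_natDegree_lt (by rw [natDegree_taylor]; omega)
    rw [h0, norm_zero, zero_mul]
    refine le_trans ?_ (Finset.le_sup'
      (f := fun k => ‖(taylor a P).coeff k‖ * t ^ k)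
      (Finset.mem_range.mpr (Nat.succ_pos _)))
    positivity

lemma berkNorm_nonneg (ht : 0 < t) (P : K[X]) : 0 ≤ berkNorm a t P :=
  le_trans (by positivity) (term_le a t ht P 0)

lemma berkNorm_le (P : K[X]) {B : ℝ}
    (h : ∀ k, ‖(taylor a P).coeff k‖ * t ^ k ≤ B) :
    berkNorm a t P ≤ B :=
  Finset.sup'_le _ _ fun k _ => h k

lemma berkNorm_C (c : K) : berkNorm a t (C c) = ‖c‖ := by
  simp [berkNorm, taylor_C]

lemma berkNorm_X_sub_C (ht : 0 < t) (c : K) :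
    berkNorm a t (X - C c) = max ‖a - c‖ t := by
  have htay : taylor a (X - C c) = X + C (a - c) := by
    rw [map_sub, taylor_X, taylor_C, Polynomial.C_sub]; ring
  apply le_antisymm
  · apply berkNorm_le
    intro k
    match k with
    | 0 => simp [htay]
    | 1 => simp [htay]
    | (n+2) =>
      rw [htay]
      have : (X + C (a - c)).coeff (n+2) = 0 := by
        apply coeff_eq_zero_of_natDegree_lt
        calc (X + C (a-c)).natDegree ≤ max X.natDegree (C (a-c)).natDegree :=
              natDegree_add_le _ _
          _ ≤ 1 := by simp
          _ < n + 2 := by omega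
      rw [this, norm_zero, zero_mul]
      refine le_trans ht.le (le_max_right _ _)
  · apply max_le
    · have h0 := term_le a t ht (X - C c) 0
      rw [htay] at h0
      simpa using h0
    · have h1 := term_le a t ht (X - C c) 1
      rw [htay] at h1
      simpa using h1

lemma berkNorm_pos (ht : 0 < t) {P : K[X]} (hP : P ≠ 0) : 0 < berkNorm a t P := by
  rcases lt_or_eq_of_le (berkNorm_nonneg a t ht P) with h | h
  · exact h
  exfalso
  apply hP
  apply taylor_injective a
  rw [map_zero]
  ext k
  have h2 : (0:ℝ) ≤ ‖(taylor a P).coeff k‖ * t ^ k := by positivity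
  have h3 : ‖(taylor a P).coeff k‖ * t ^ k = 0 :=
    le_antisymm (h ▸ term_le a t ht P k) h2
  rcases mul_eq_zero.mp h3 with h4 | h4
  · simpa using norm_eq_zero.mp h4
  · exact absurd h4 (by positivity)

lemma berkNorm_sum_le (ht : 0 < t) {ι : Type*} (s : Finset ι) (f : ι → K[X]) {B : ℝ}
    (hB : 0 ≤ B) (h : ∀ i ∈ s, berkNorm a t (f i) ≤ B) :
    berkNorm a t (∑ i ∈ s, f i) ≤ B := by
  apply berkNorm_le
  intro k
  have htk : (0:ℝ) < t ^ k := by positivity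
  rw [map_sum, finset_sum_coeff]
  have hsum : ‖∑ i ∈ s, (taylor a (f i)).coeff k‖ ≤ B / t ^ k := by
    apply IsUltrametricDist.norm_sum_le_of_forall_le_of_nonneg (by positivity)
    intro i hi
    rw [le_div_iff₀ htk]
    exact le_trans (term_le a t ht (f i) k) (h i hi)
  calc ‖∑ i ∈ s, (taylor a (f i)).coeff k‖ * t ^ k
      ≤ (B / t ^ k) * t ^ k := mul_le_mul_of_nonneg_right hsum htk.le
    _ = B := div_mul_cancel₀ _ htk.ne'

lemma berkNorm_mul_le (ht : 0 < t) (P Q : K[X]) :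
    berkNorm a t (P * Q) ≤ berkNorm a t P * berkNorm a t Q := by
  have hPn := berkNorm_nonneg a t ht P
  have hQn := berkNorm_nonneg a t ht Q
  apply berkNorm_le
  intro k
  have htk : (0:ℝ) < t ^ k := by positivity
  rw [taylor_mul, coeff_mul]
  have hsum : ‖∑ x ∈ Finset.HasAntidiagonal.antidiagonal k,
      (taylor a P).coeff x.1 * (taylor a Q).coeff x.2‖
      ≤ (berkNorm a t P * berkNorm a t Q) / t ^ k := by
    apply IsUltrametricDist.norm_sum_le_of_forall_le_of_nonneg (by positivity)
    intro x hx
    have hx' : x.1 + x.2 = k := Finset.HasAntidiagonal.mem_antidiagonal.mp hx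
    have h1 : ‖(taylor a P).coeff x.1‖ ≤ berkNorm a t P / t ^ x.1 := by
      rw [le_div_iff₀ (by positivity)]; exact term_le a t ht P x.1
    have h2 : ‖(taylor a Q).coeff x.2‖ ≤ berkNorm a t Q / t ^ x.2 := by
      rw [le_div_iff₀ (by positivity)]; exact term_le a t ht Q x.2
    calc ‖(taylor a P).coeff x.1 * (taylor a Q).coeff x.2‖
        = ‖(taylor a P).coeff x.1‖ * ‖(taylor a Q).coeff x.2‖ := norm_mul _ _
      _ ≤ (berkNorm a t P / t ^ x.1) * (berkNorm a t Q / t ^ x.2) :=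
          mul_le_mul h1 h2 (norm_nonneg _) (by positivity)
      _ = (berkNorm a t P * berkNorm a t Q) / t ^ k := by
          rw [div_mul_div_comm, ← pow_add, hx']
  calc ‖∑ x ∈ Finset.HasAntidiagonal.antidiagonal k,
      (taylor a P).coeff x.1 * (taylor a Q).coeff x.2‖ * t ^ k
      ≤ ((berkNorm a t P * berkNorm a t Q) / t ^ k) * t ^ k :=
        mul_le_mul_of_nonneg_right hsum htk.le
    _ = _ := div_mul_cancel₀ _ htk.ne'

lemma berkNorm_one : berkNorm a t (1 : K[X]) = 1 := by
  rw [show (1 : K[X]) = C 1 by simp, berkNorm_C, norm_one]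

lemma berkNorm_prod_le (ht : 0 < t) {ι : Type*} (s : Finset ι) (f : ι → K[X]) (g : ι → ℝ)
    (h : ∀ i ∈ s, berkNorm a t (f i) ≤ g i) (hg : ∀ i ∈ s, 0 ≤ g i) :
    berkNorm a t (∏ i ∈ s, f i) ≤ ∏ i ∈ s, g i := by
  induction s using Finset.cons_induction with
  | empty => simp [berkNorm_one]
  | cons i s his ih =>
    rw [Finset.prod_cons, Finset.prod_cons]
    refine le_trans (berkNorm_mul_le a t ht _ _) ?_
    exact mul_le_mul (h i (Finset.mem_cons_self _ _))
      (ih (fun j hj => h j (Finset.mem_cons_of_mem hj))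
          (fun j hj => hg j (Finset.mem_cons_of_mem hj)))
      (berkNorm_nonneg a t ht _)
      (hg i (Finset.mem_cons_self _ _))

lemma norm_eval_le (ht : 0 < t) (P : K[X]) (x : K) :
    ‖P.eval x‖ ≤ berkNorm a t P * (max 1 (‖x - a‖ / t)) ^ P.natDegree := by
  set n := P.natDegree with hn
  set Cm := max 1 (‖x - a‖ / t) with hCm
  have hCm1 : (1:ℝ) ≤ Cm := le_max_left _ _
  have hCm0 : (0:ℝ) < Cm := lt_of_lt_of_le one_pos hCm1
  have hxa : ‖x - a‖ ≤ Cm * t := by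
    rw [← div_le_iff₀ ht]
    exact le_max_right _ _
  have hev : P.eval x = (taylor a P).eval (x - a) := (taylor_eval_sub a P x).symm
  rw [hev, eval_eq_sum_range]
  apply IsUltrametricDist.norm_sum_le_of_forall_le_of_nonneg
  · have := berkNorm_nonneg a t ht P
    positivity
  intro k hk
  rw [Finset.mem_range, natDegree_taylor, ← hn] at hk
  have hk' : k ≤ n := Nat.lt_succ_iff.mp hk
  calc ‖(taylor a P).coeff k * (x - a) ^ k‖
      = ‖(taylor a P).coeff k‖ * ‖x - a‖ ^ k := by rw [norm_mul, norm_pow]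
    _ ≤ ‖(taylor a P).coeff k‖ * (Cm * t) ^ k := by
        apply mul_le_mul_of_nonneg_left _ (norm_nonneg _)
        exact pow_le_pow_left₀ (norm_nonneg _) hxa k
    _ = (‖(taylor a P).coeff k‖ * t ^ k) * Cm ^ k := by ring
    _ ≤ berkNorm a t P * Cm ^ k :=
        mul_le_mul_of_nonneg_right (term_le a t ht P k) (by positivity)
    _ ≤ berkNorm a t P * Cm ^ n := by
        apply mul_le_mul_of_nonneg_left _ (berkNorm_nonneg a t ht P)
        exact pow_le_pow_right₀ hCm1 hk'

/-- Recursive selection of `m` points of the net that are pairwise at distance `≥ t(1-δ)`,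
within `t(1+δ)` of `a`, and on which `w` is at most `L`. -/
lemma exists_points {J : Type*} [Nonempty J] [SemilatticeSup J] (γ : J → K)
    (H : ∀ c : K, ‖c - a‖ ≤ t → Tendsto (fun j => ‖γ j - c‖) atTop (nhds t))
    (ht : 0 < t) {δ : ℝ} (hδ0 : 0 < δ) (hδ1 : δ < 1)
    (w : K → ℝ) {L : ℝ} (hfreq : ∃ᶠ j in atTop, w (γ j) ≤ L) (m : ℕ) :
    ∃ y : Fin m → K, (∀ i k, i ≠ k → t * (1 - δ) ≤ ‖y i - y k‖) ∧
      (∀ i, ‖y i - a‖ ≤ t * (1 + δ)) ∧ (∀ i, w (y i) ≤ L) := by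
  have hta : Tendsto (fun j => ‖γ j - a‖) atTop (nhds t) := H a (by simpa using ht.le)
  induction m with
  | zero => exact ⟨Fin.elim0, fun i => i.elim0, fun i => i.elim0, fun i => i.elim0⟩
  | succ m ih =>
    obtain ⟨y, hpair, hT, hw⟩ := ih
    have E1 : ∀ᶠ j in atTop, ‖γ j - a‖ ≤ t * (1 + δ) :=
      hta.eventually (eventually_le_nhds (by nlinarith))
    have E2 : ∀ᶠ j in atTop, ∀ i : Fin m, t * (1 - δ) ≤ ‖γ j - y i‖ := by
      rw [eventually_all]
      intro i
      by_cases hyi : ‖y i - a‖ ≤ t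
      · have h' : t * (1 - δ) < t := by nlinarith
        exact (H (y i) hyi).eventually (eventually_ge_nhds h')
      · push_neg at hyi
        refine (hta.eventually (eventually_lt_nhds hyi)).mono fun j hj => ?_
        have h1 : γ j - y i = (γ j - a) + (a - y i) := by ring
        have h2 : ‖γ j - y i‖ = ‖y i - a‖ := by
          rw [h1, IsUltrametricDist.norm_add_eq_max_of_norm_ne_norm
            (by rw [norm_sub_rev a (y i)]; exact ne_of_lt hj),
            norm_sub_rev a (y i)]
          exact max_eq_right hj.le
        rw [h2]
        nlinarith
    obtain ⟨j, hwj, hjd, hji⟩ := (hfreq.and_eventually (E1.and E2)).exists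
    refine ⟨Fin.snoc y (γ j), ?_, ?_, ?_⟩
    · intro i k hik
      induction i using Fin.lastCases with
      | last =>
        induction k using Fin.lastCases with
        | last => exact absurd rfl hik
        | cast k => simpa [Fin.snoc_castSucc, Fin.snoc_last] using hji k
      | cast i =>
        induction k using Fin.lastCases with
        | last =>
          rw [Fin.snoc_castSucc, Fin.snoc_last, norm_sub_rev]
          exact hji i
        | cast k =>
          rw [Fin.snoc_castSucc, Fin.snoc_castSucc]
          exact hpair i k (fun h => hik (congrArg Fin.castSucc h))
    · intro i
      induction i using Fin.lastCases with
      | last => simpa [Fin.snoc_last] using hjd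
      | cast i => simpa [Fin.snoc_castSucc] using hT i
    · intro i
      induction i using Fin.lastCases with
      | last => simpa [Fin.snoc_last] using hwj
      | cast i => simpa [Fin.snoc_castSucc] using hw i

end BerkAux

/-- Proposition 5.8 of the paper.  A net `γ_j` of classical (type I)
points of the Berkovich affine line over a non-archimedean valued field converges to the
point `ξ = ζ_{a,t}` (`t > 0`) — i.e. `‖P(γ_j)‖ → |P|_ξ` for every polynomial `P` — if and
only if (1) for every finite tangent direction at `ξ`, represented by `c ∈ D̄(a,t)`, one has
`lim_j ‖γ_j - c‖ = t`, and (2) `lim_j t_j = t` where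
`t_j = min{τ > 0 : ζ_{a,t} ∈ D̄(γ_j, τ)} = max(‖γ_j - a‖, t)`. -/
theorem stmt14 {K : Type*} [NontriviallyNormedField K] [IsUltrametricDist K]
    {J : Type*} [Nonempty J] [SemilatticeSup J]
    (γ : J → K) (a : K) (t : ℝ) (ht : 0 < t) :
    (∀ P : Polynomial K,
        Tendsto (fun j => ‖P.eval (γ j)‖) atTop (nhds (berkNorm a t P))) ↔
      ((∀ c : K, ‖c - a‖ ≤ t →
          Tendsto (fun j => ‖γ j - c‖) atTop (nhds t)) ∧
        Tendsto (fun j => max ‖γ j - a‖ t) atTop (nhds t)) := by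
  open Polynomial BerkAux in
  constructor
  · intro H
    have key : ∀ c : K, ‖c - a‖ ≤ t →
        Tendsto (fun j => ‖γ j - c‖) atTop (nhds t) := by
      intro c hc
      have h := H (X - C c)
      have hb : berkNorm a t (X - C c) = t := by
        rw [berkNorm_X_sub_C a t ht c]
        exact max_eq_right (by rw [norm_sub_rev]; exact hc)
      rw [hb] at h
      simpa using h
    refine ⟨key, ?_⟩
    have h1 := key a (by simpa using ht.le)
    simpa using h1.max (tendsto_const_nhds (x := t))
  · rintro ⟨H, -⟩ P
    have hta : Tendsto (fun j => ‖γ j - a‖) atTop (nhds t) := H a (by simpa using ht.le)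
    by_cases hP : P = 0
    · have h0 : berkNorm a t (0 : K[X]) = 0 := by
        rw [show (0:K[X]) = C 0 by simp, berkNorm_C, norm_zero]
      simpa [hP, h0] using tendsto_const_nhds
    set M := berkNorm a t P with hM
    have hMpos : 0 < M := berkNorm_pos a t ht hP
    set n := P.natDegree with hn
    rw [Metric.tendsto_nhds]
    intro ε hε
    have hupper : ∀ᶠ j in atTop, ‖P.eval (γ j)‖ < M + ε := by
      have h1 : Tendsto (fun j => ‖γ j - a‖ / t) atTop (nhds 1) := by
        simpa [div_self ht.ne'] using hta.div_const t
      have h2 : Tendsto (fun j => max 1 (‖γ j - a‖ / t)) atTop (nhds 1) := by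
        simpa using (tendsto_const_nhds (x := (1:ℝ))).max h1
      have h3 : Tendsto (fun j => M * (max 1 (‖γ j - a‖ / t)) ^ n) atTop (nhds M) := by
        simpa using (tendsto_const_nhds (x := M)).mul (h2.pow n)
      refine (h3.eventually (eventually_lt_nhds (show M < M + ε by linarith))).mono fun j hj => ?_
      exact lt_of_le_of_lt (norm_eval_le a t ht P (γ j)) hj
    have hlower : ∀ᶠ j in atTop, M - ε < ‖P.eval (γ j)‖ := by
      set ε' := min ε (M / 2) with hε'
      have hε'pos : 0 < ε' := lt_min hε (by linarith)
      have hε'M : ε' < M := lt_of_le_of_lt (min_le_right _ _) (by linarith)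
      have hee : ε' ≤ ε := min_le_left _ _
      suffices h : ∀ᶠ j in atTop, M - ε' < ‖P.eval (γ j)‖ by
        exact h.mono fun j hj => lt_of_le_of_lt (by linarith) hj
      by_contra hcon
      rw [Filter.not_eventually] at hcon
      have hfreq : ∃ᶠ j in atTop, ‖P.eval (γ j)‖ ≤ M - ε' := by
        refine hcon.mono fun j hj => ?_
        push_neg at hj
        exact hj
      -- choose δ
      obtain ⟨δ, hδ0, hδ1, hδ⟩ : ∃ δ : ℝ, 0 < δ ∧ δ < 1 ∧
          (M - ε') * ((1 + δ) / (1 - δ)) ^ n < M := by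
        have hc : ContinuousAt (fun x : ℝ => (M - ε') * ((1 + x) / (1 - x)) ^ n) 0 := by
          apply ContinuousAt.mul continuousAt_const
          apply ContinuousAt.pow
          exact ContinuousAt.div (by fun_prop) (by fun_prop) (by norm_num)
        have hf0 : (fun x : ℝ => (M - ε') * ((1 + x) / (1 - x)) ^ n) 0 = M - ε' := by
          norm_num
        have hlt : ∀ᶠ x in nhds (0:ℝ),
            (M - ε') * ((1 + x) / (1 - x)) ^ n < M :=
          hc.eventually_lt_const (by rw [hf0]; linarith)
        have h3 : ∀ᶠ x in nhdsWithin (0:ℝ) (Set.Ioi 0),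
            0 < x ∧ x < 1 ∧ (M - ε') * ((1 + x) / (1 - x)) ^ n < M := by
          filter_upwards [self_mem_nhdsWithin,
            hlt.filter_mono nhdsWithin_le_nhds,
            (eventually_lt_nhds one_pos).filter_mono nhdsWithin_le_nhds] with x hx1 hx2 hx3
          exact ⟨hx1, hx3, hx2⟩
        obtain ⟨δ, h⟩ := h3.exists
        exact ⟨δ, h.1, h.2.1, h.2.2⟩
      obtain ⟨y, hpair, hT, hvals⟩ := exists_points a t γ H ht hδ0 hδ1
        (fun x => ‖P.eval x‖) hfreq (n + 1)
      have hs : (0:ℝ) < t * (1 - δ) := by nlinarith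
      have hinj : Set.InjOn y ↑(Finset.univ : Finset (Fin (n + 1))) := by
        intro i _ k _ h
        by_contra hne
        have := hpair i k hne
        rw [h] at this
        simp at this
        nlinarith
      have hdeg : P.degree < (Finset.univ : Finset (Fin (n + 1))).card := by
        rw [Finset.card_univ, Fintype.card_fin]
        exact lt_of_le_of_lt P.degree_le_natDegree (by exact_mod_cast Nat.lt_succ_self n)
      have hPint := Lagrange.eq_interpolate (v := y) hinj hdeg
      have hρ0 : (0:ℝ) ≤ (1 + δ) / (1 - δ) := div_nonneg (by linarith) (by linarith)
      have hbd : ∀ i k : Fin (n + 1), i ≠ k →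
          berkNorm a t (Lagrange.basisDivisor (y i) (y k)) ≤ (1 + δ) / (1 - δ) := by
        intro i k hik
        rw [Lagrange.basisDivisor]
        refine le_trans (berkNorm_mul_le a t ht _ _) ?_
        rw [berkNorm_C, berkNorm_X_sub_C a t ht, norm_inv]
        have h1 : t * (1 - δ) ≤ ‖y i - y k‖ := hpair i k hik
        have h2 : ‖y i - y k‖⁻¹ ≤ (t * (1 - δ))⁻¹ := inv_anti₀ hs h1
        have h3 : max ‖a - y k‖ t ≤ t * (1 + δ) :=
          max_le (by rw [norm_sub_rev]; exact hT k) (by nlinarith)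
        calc ‖y i - y k‖⁻¹ * max ‖a - y k‖ t
            ≤ (t * (1 - δ))⁻¹ * (t * (1 + δ)) :=
              mul_le_mul h2 h3 (le_trans ht.le (le_max_right _ _)) (by positivity)
          _ = (1 + δ) / (1 - δ) := by
              have ht' : t ≠ 0 := ht.ne'
              have h1δ : (1:ℝ) - δ ≠ 0 := by linarith
              field_simp
      have hbasis : ∀ i : Fin (n + 1),
          berkNorm a t (Lagrange.basis Finset.univ y i) ≤ ((1 + δ) / (1 - δ)) ^ n := by
        intro i
        rw [Lagrange.basis]
        refine le_trans (berkNorm_prod_le a t ht _ _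
          (fun _ => (1 + δ) / (1 - δ)) ?_ ?_) ?_
        · intro k hk
          exact hbd i k (Ne.symm (Finset.mem_erase.mp hk).1)
        · intro k _
          exact hρ0
        · rw [Finset.prod_const, Finset.card_erase_of_mem (Finset.mem_univ i),
            Finset.card_univ, Fintype.card_fin]
          simp
      have hB : (0:ℝ) ≤ (M - ε') * ((1 + δ) / (1 - δ)) ^ n := by
        have := le_trans (norm_nonneg (P.eval (y 0))) (hvals 0)
        positivity
      have hbound : M ≤ (M - ε') * ((1 + δ) / (1 - δ)) ^ n := by
        conv_lhs => rw [hM, hPint, Lagrange.interpolate_apply]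
        apply berkNorm_sum_le a t ht _ _ hB
        intro i _
        refine le_trans (berkNorm_mul_le a t ht _ _) ?_
        rw [berkNorm_C]
        exact mul_le_mul (hvals i) (hbasis i) (berkNorm_nonneg a t ht _)
          (le_trans (norm_nonneg _) (hvals i))
      exact absurd hbound (not_le.mpr hδ)
    filter_upwards [hupper, hlower] with j h1 h2
    rw [Real.dist_eq, abs_sub_lt_iff]
    constructor <;> linarith
end

section
/- Let F be a perfect field of characteristic p > 0, L = F(T), S a finite set of places of L, and C the (finite) set of separable nonconstant S-unit solutions (u,v) of u + v = 1. Suppose v ∈ C and m₂ > m₁ ≥ 1 are integers with −1 + p^{m₂−m₁} > max_{w∈C} deg(w). If v^{−1+p^{m₂−m₁}} is also a p-power root of an element of C in the sense that (v^{−1+p^{m₂−m₁}})^{p^{m₁}} arises as a nonconstant S-unit solution u with u + (1−u) both S-units, then since gcd(−1 + p^{m₂−m₁}, p) = 1, v^{−1+p^{m₂−m₁}} ∈ C, contradicting deg(v^{−1+p^{m₂−m₁}}) ≥ −1 + p^{m₂−m₁} > max_{w∈C} deg(w). Conclude: for fixed v ∈ C, the set of exponents m ≥ 1 such that v^{p^m}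 = u/u₀ for some u in a fixed 'difference-unit' set A (as in the S-unit-difference lemma) is finite. -/
/-
If `u₀ v ^ p ^ m₁` and `u₀ v ^ p ^ m₂` (with `m₁ < m₂`) both lie in `A`, their difference shows
that `v ^ N - 1` is an `S`-unit for `N = p ^ m₁ (p ^ k - 1)`, `k = m₂ - m₁`. Writing `v = f / g`
in lowest terms, every prime factor of `f ^ N - g ^ N = (f ^ n - g ^ n) ^ p ^ m₁`, `n = p ^ k - 1`,
then comes from `S`. Since `p ∤ n`, Mason–Stothers applied to `f ^ n + (g ^ n - f ^ n) = g ^ n`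
(after extracting `p`-th roots of `f, g` until one of them has nonzero derivative) bounds `n`
by `deg f + deg g + ∑_{π ∈ S} deg π`. Hence `m₂ - m₁` is bounded.
-/

open Polynomial

/-- `u` is an `S`-unit of the rational function field `F(T)` (where `S` is a finite set of
finite places, given by irreducible polynomials, together with the place at infinity). -/
def IsSUnit {F : Type*} [Field F] (S : Finset (Polynomial F)) (u : RatFunc F) : Prop :=
  ∃ (c : F) (e : Polynomial F → ℤ), c ≠ 0 ∧
    u = RatFunc.C c * ∏ π ∈ S, (algebraMap (Polynomial F) (RatFunc F) π) ^ (e π)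

open UniqueFactorizationMonoid

theorem Finset.prod_zpow_eq_div {ι G₀ : Type*} [CommGroupWithZero G₀] (s : Finset ι) (f : ι → G₀)
    (e : ι → ℤ) :
    ∏ i ∈ s, f i ^ e i = (∏ i ∈ s, f i ^ (e i).toNat) / ∏ i ∈ s, f i ^ (-e i).toNat := by
  rw [← Finset.prod_div_distrib]
  refine Finset.prod_congr rfl fun i _ => ?_
  obtain ⟨n, h | h⟩ := Int.eq_nat_or_neg (e i) <;> simp [h]

theorem IsCoprime.isUnit_of_pow_eq_pow {R : Type*} [CommSemiring R] {a b : R} (h : IsCoprime a b)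
    {n : ℕ} (hn : n ≠ 0) (hab : a ^ n = b ^ n) : IsUnit a :=
  h.pow_right.isUnit_of_dvd' dvd_rfl (hab ▸ dvd_pow_self a hn)

namespace IsSUnit

variable {F : Type*} [Field F] {S : Finset F[X]} {u w : RatFunc F}

theorem ne_zero (hS : ∀ π ∈ S, π ≠ 0) (hu : IsSUnit S u) : u ≠ 0 := by
  obtain ⟨c, e, hc, rfl⟩ := hu
  refine mul_ne_zero (by simpa using hc) (Finset.prod_ne_zero_iff.mpr fun π hπ => ?_)
  exact zpow_ne_zero _ (by simpa using hS π hπ)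

theorem div (hS : ∀ π ∈ S, π ≠ 0) (hu : IsSUnit S u) (hw : IsSUnit S w) :
    IsSUnit S (u / w) := by
  obtain ⟨c, e, hc, rfl⟩ := hu
  obtain ⟨d, e', hd, rfl⟩ := hw
  refine ⟨c / d, e - e', div_ne_zero hc hd, ?_⟩
  rw [map_div₀, mul_div_mul_comm, ← Finset.prod_div_distrib]
  congr 1
  refine Finset.prod_congr rfl fun π hπ => ?_
  rw [Pi.sub_apply, zpow_sub₀ (by simpa using hS π hπ)]

theorem radical_dvd_prod [DecidableEq F] (hS : ∀ π ∈ S, π ≠ 0) {a b : F[X]}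
    (hab : IsCoprime a b) (hb : b ≠ 0)
    (h : IsSUnit S (algebraMap F[X] (RatFunc F) a / algebraMap F[X] (RatFunc F) b)) :
    radical a ∣ ∏ π ∈ S, π := by
  obtain ⟨c, e, hc, he⟩ := h
  set P := ∏ π ∈ S, π ^ (e π).toNat
  set Q := ∏ π ∈ S, π ^ (-e π).toNat
  have hQ : Q ≠ 0 := Finset.prod_ne_zero_iff.mpr fun π hπ => pow_ne_zero _ (hS π hπ)
  have hPQ : a * Q = C c * P * b := by
    have hα : algebraMap F[X] (RatFunc F) a / algebraMap F[X] (RatFunc F) b =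
        algebraMap F[X] (RatFunc F) (C c) *
          (algebraMap F[X] (RatFunc F) P / algebraMap F[X] (RatFunc F) Q) := by
      rw [he, Finset.prod_zpow_eq_div, RatFunc.algebraMap_C]
      simp only [P, Q, map_prod, map_pow]
    apply RatFunc.algebraMap_injective F
    rw [mul_div_assoc', div_eq_div_iff (by simpa using hb) (by simpa using hQ)] at hα
    simpa only [map_mul, mul_right_comm _ (algebraMap F[X] (RatFunc F) b)] using hα
  have haP : a ∣ P := by
    rw [← (isUnit_C.mpr hc.isUnit).dvd_mul_left]
    exact hab.dvd_of_dvd_mul_right (hPQ ▸ dvd_mul_right a Q)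
  have hP : P ≠ 0 := Finset.prod_ne_zero_iff.mpr fun π hπ => pow_ne_zero _ (hS π hπ)
  refine (radical_dvd_radical haP hP).trans (radical_prod_dvd.trans ?_)
  exact Finset.prod_dvd_prod_of_dvd _ _ fun π _ => radical_pow_dvd.trans radical_dvd_self

theorem natDegree_radical_le [DecidableEq F] (hS : ∀ π ∈ S, π ≠ 0) {a b : F[X]}
    (hab : IsCoprime a b) (hb : b ≠ 0)
    (h : IsSUnit S (algebraMap F[X] (RatFunc F) a / algebraMap F[X] (RatFunc F) b)) :
    (radical a).natDegree ≤ ∑ π ∈ S, π.natDegree :=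
  (natDegree_le_of_dvd (radical_dvd_prod hS hab hb h) (Finset.prod_ne_zero_iff.mpr hS)).trans
    (natDegree_prod_le S fun π => π)

theorem sub_one_of_mem_of_mul_mem (hS : ∀ π ∈ S, π ≠ 0) {A : Set (RatFunc F)}
    (hA : ∀ u ∈ A, IsSUnit S u) (hdiff : ∀ u ∈ A, ∀ v ∈ A, u ≠ v → IsSUnit S (u - v))
    (hw : w ≠ 1) (hu : u ∈ A) (huw : u * w ∈ A) : IsSUnit S (w - 1) := by
  have hu₀ := (hA u hu).ne_zero hS
  have hne : u * w ≠ u := fun h => hw ((mul_eq_left₀ hu₀).mp h)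
  have hquot : w - 1 = (u * w - u) / u := by field_simp
  exact hquot ▸ (hdiff _ huw _ hu hne).div hS (hA u hu)

end IsSUnit

namespace Polynomial

variable {k : Type*} [Field k] {f g : k[X]} {n : ℕ}

theorem derivative_eq_zero_of_isUnit (hf : IsUnit f) : derivative f = 0 :=
  derivative_of_natDegree_zero (natDegree_eq_zero_of_isUnit hf)

theorem derivative_eq_zero_of_derivative_pow_eq_zero (hn : (n : k) ≠ 0)
    (h : derivative (f ^ n) = 0) : derivative f = 0 := by
  by_cases hf : f = 0
  · simp [hf]
  rw [derivative_pow, mul_eq_zero, mul_eq_zero, C_eq_zero] at h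
  exact h.resolve_left (not_or.mpr ⟨hn, pow_ne_zero _ hf⟩)

theorem pow_sub_pow_ne_zero_of_isCoprime (hfg : IsCoprime f g)
    (hdeg : 0 < f.natDegree + g.natDegree) (hn : n ≠ 0) : f ^ n - g ^ n ≠ 0 := by
  intro h
  have hf := natDegree_eq_zero_of_isUnit (hfg.isUnit_of_pow_eq_pow hn (sub_eq_zero.mp h))
  have hg := natDegree_eq_zero_of_isUnit (hfg.symm.isUnit_of_pow_eq_pow hn (sub_eq_zero.mp h).symm)
  omega

/-- Mason–Stothers applied to `f ^ n + (g ^ n - f ^ n) = g ^ n`. -/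
theorem lt_natDegree_add_natDegree_radical_pow_sub_pow_of_derivative_ne_zero [DecidableEq k]
    (hfg : IsCoprime f g) (hder : derivative f ≠ 0 ∨ derivative g ≠ 0) (hn : (n : k) ≠ 0) :
    n < f.natDegree + g.natDegree + (radical (f ^ n - g ^ n)).natDegree := by
  have hn0 : n ≠ 0 := by rintro rfl; simp at hn
  have hf : f ≠ 0 := by
    rintro rfl
    simp [derivative_eq_zero_of_isUnit (isCoprime_zero_left.mp hfg)] at hder
  have hg : g ≠ 0 := by
    rintro rfl
    simp [derivative_eq_zero_of_isUnit (isCoprime_zero_right.mp hfg)] at hder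
  have hpos : 0 < f.natDegree ∨ 0 < g.natDegree :=
    hder.imp (Nat.pos_of_ne_zero <| mt derivative_of_natDegree_zero ·)
      (Nat.pos_of_ne_zero <| mt derivative_of_natDegree_zero ·)
  rcases Polynomial.abc (pow_ne_zero n hf) (neg_ne_zero.mpr (pow_ne_zero n hg))
      (neg_ne_zero.mpr (pow_sub_pow_ne_zero_of_isCoprime hfg (by omega) hn0)) hfg.pow.neg_right
      (by ring) with ⟨hdf, hdg, -⟩ | ⟨hdf, hdg, -⟩
  · have hrad : (radical (f ^ n * -g ^ n * -(f ^ n - g ^ n))).natDegree ≤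
        f.natDegree + g.natDegree + (radical (f ^ n - g ^ n)).natDegree := by
      calc _ ≤ (radical (f ^ n) * radical (-g ^ n) * radical (-(f ^ n - g ^ n))).natDegree :=
            natDegree_le_of_dvd (radical_mul_dvd.trans (mul_dvd_mul_right radical_mul_dvd _))
              (by simp [radical_ne_zero])
        _ = (radical f).natDegree + (radical g).natDegree +
              (radical (f ^ n - g ^ n)).natDegree := by
            rw [UniqueFactorizationDomain.radical_neg, UniqueFactorizationDomain.radical_neg,
              radical_pow f hn0, radical_pow g hn0,
              natDegree_mul (by simp [radical_ne_zero]) radical_ne_zero,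
              natDegree_mul radical_ne_zero radical_ne_zero]
        _ ≤ _ := by gcongr <;> exact natDegree_radical_le
    rw [natDegree_pow] at hdf
    rw [natDegree_neg, natDegree_pow] at hdg
    rcases hpos with h | h <;> nlinarith
  · rw [derivative_neg, neg_eq_zero] at hdg
    exfalso
    exact hder.elim (· (derivative_eq_zero_of_derivative_pow_eq_zero hn hdf))
      (· (derivative_eq_zero_of_derivative_pow_eq_zero hn hdg))

theorem exists_eq_pow_of_derivative_eq_zero (p : ℕ) [Fact p.Prime] [CharP k p] [PerfectRing k p]
    (hf : derivative f = 0) : ∃ h : k[X], f = h ^ p :=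
  ⟨_, (expand_contract p hf (Fact.out : p.Prime).ne_zero).symm.trans (polynomial_expand_eq k p _)⟩

/-- Extracting `p`-th roots until one derivative is nonzero keeps the bound's right-hand side
from growing, since `(f ^ p) ^ n - (g ^ p) ^ n = (f ^ n - g ^ n) ^ p`. -/
theorem lt_natDegree_add_natDegree_radical_pow_sub_pow (p : ℕ) [Fact p.Prime] [CharP k p]
    [PerfectRing k p] [DecidableEq k] (hfg : IsCoprime f g) (hdeg : 0 < f.natDegree + g.natDegree)
    (hn : (n : k) ≠ 0) :
    n < f.natDegree + g.natDegree + (radical (f ^ n - g ^ n)).natDegree := by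
  induction hd : f.natDegree + g.natDegree using Nat.strong_induction_on generalizing f g with
  | _ d ih =>
  by_cases hder : derivative f ≠ 0 ∨ derivative g ≠ 0
  · exact hd ▸ lt_natDegree_add_natDegree_radical_pow_sub_pow_of_derivative_ne_zero hfg hder hn
  rw [not_or, not_not, not_not] at hder
  have hp := (Fact.out : p.Prime)
  obtain ⟨f₁, rfl⟩ := exists_eq_pow_of_derivative_eq_zero p hder.1
  obtain ⟨g₁, rfl⟩ := exists_eq_pow_of_derivative_eq_zero p hder.2
  have hroot : (f₁ ^ p) ^ n - (g₁ ^ p) ^ n = (f₁ ^ n - g₁ ^ n) ^ p := by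
    rw [← pow_one p, sub_pow_char_pow, ← pow_mul, ← pow_mul, ← pow_mul, ← pow_mul, mul_comm n]
  simp only [natDegree_pow] at hd hdeg
  subst hd
  have hdeg₁ : 0 < f₁.natDegree + g₁.natDegree :=
    Nat.pos_of_ne_zero fun h => by simp [Nat.add_eq_zero_iff.mp h] at hdeg
  have hlt : f₁.natDegree + g₁.natDegree < p * f₁.natDegree + p * g₁.natDegree := by
    rw [← mul_add]
    exact lt_mul_left hdeg₁ hp.one_lt
  rw [hroot, radical_pow _ hp.ne_zero]
  exact (ih _ hlt ((IsCoprime.pow_iff hp.pos hp.pos).mp hfg) hdeg₁ rfl).trans_le (by omega)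

end Polynomial

theorem CharP.natCast_pow_sub_one {R : Type*} [Ring R] {p : ℕ} [CharP R p] (hp : p ≠ 0) {k : ℕ}
    (hk : k ≠ 0) : ((p ^ k - 1 : ℕ) : R) = -1 := by
  rw [Nat.cast_sub (Nat.one_le_pow _ _ (Nat.pos_of_ne_zero hp)), Nat.cast_pow, CharP.cast_eq_zero,
    zero_pow hk, Nat.cast_one, zero_sub]

namespace RatFunc

variable {F : Type*} [Field F] {v : RatFunc F}

theorem natDegree_num_add_natDegree_denom_pos (hv : ¬∃ c, v = C c) :
    0 < v.num.natDegree + v.denom.natDegree := by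
  refine Nat.pos_of_ne_zero fun h => hv ?_
  obtain ⟨c, hc⟩ := Polynomial.natDegree_eq_zero.mp (Nat.add_eq_zero_iff.mp h).1
  have hg := (monic_denom v).natDegree_eq_zero.mp (Nat.add_eq_zero_iff.mp h).2
  exact ⟨c, by rw [← num_div_denom v, hg, ← hc, map_one, div_one, algebraMap_C]⟩

theorem pow_sub_one_eq_div (v : RatFunc F) (N : ℕ) :
    v ^ N - 1 = algebraMap F[X] (RatFunc F) (v.num ^ N - v.denom ^ N) /
      algebraMap F[X] (RatFunc F) (v.denom ^ N) := by
  conv_lhs => rw [← num_div_denom v]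
  rw [map_sub, sub_div, div_self (algebraMap_ne_zero (pow_ne_zero N v.denom_ne_zero)), map_pow,
    map_pow, div_pow]

theorem pow_ne_one (hv : ¬∃ c, v = C c) {N : ℕ} (hN : N ≠ 0) : v ^ N ≠ 1 := by
  rw [← sub_ne_zero, pow_sub_one_eq_div]
  exact div_ne_zero (algebraMap_ne_zero (pow_sub_pow_ne_zero_of_isCoprime v.isCoprime_num_denom
    (natDegree_num_add_natDegree_denom_pos hv) hN))
    (algebraMap_ne_zero (pow_ne_zero N v.denom_ne_zero))

theorem lt_natDegree_num_add_natDegree_denom_add_sum_of_isSUnit [PerfectField F] (p : ℕ)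
    [Fact p.Prime] [CharP F p] {S : Finset F[X]} (hS : ∀ π ∈ S, π ≠ 0) (hv : ¬∃ c, v = C c)
    {m n : ℕ} (hn : (n : F) ≠ 0) (h : IsSUnit S (v ^ (p ^ m * n) - 1)) :
    n < v.num.natDegree + v.denom.natDegree + ∑ π ∈ S, π.natDegree := by
  classical
  have hp : p.Prime := Fact.out
  have hcop : IsCoprime (v.num ^ (p ^ m * n) - v.denom ^ (p ^ m * n)) (v.denom ^ (p ^ m * n)) := by
    simpa using (IsCoprime.sub_mul_left_left_iff (z := 1)).mpr v.isCoprime_num_denom.pow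
  have hrad := IsSUnit.natDegree_radical_le hS hcop (pow_ne_zero _ v.denom_ne_zero)
    (pow_sub_one_eq_div v _ ▸ h)
  rw [pow_mul', pow_mul', ← sub_pow_char_pow, radical_pow _ (pow_ne_zero _ hp.ne_zero)] at hrad
  exact (lt_natDegree_add_natDegree_radical_pow_sub_pow p v.isCoprime_num_denom
    (natDegree_num_add_natDegree_denom_pos hv) hn).trans_le (by omega)

end RatFunc

theorem stmt17_general {F : Type*} [Field F] [PerfectField F]
    (p : ℕ) [Fact p.Prime] [CharP F p]
    (S : Finset (Polynomial F)) (hS : ∀ π ∈ S, Irreducible π)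
    (A : Set (RatFunc F)) (hA : ∀ u ∈ A, IsSUnit S u)
    (hdiff : ∀ u ∈ A, ∀ v ∈ A, u ≠ v → IsSUnit S (u - v))
    (u₀ : RatFunc F)
    (v : RatFunc F) (hvnc : ¬ ∃ c : F, v = RatFunc.C c) :
    {m : ℕ | 1 ≤ m ∧ ∃ u ∈ A, u = u₀ * v ^ (p ^ m)}.Finite := by
  have hp : p.Prime := Fact.out
  have hS₀ : ∀ π ∈ S, π ≠ 0 := fun π hπ => (hS π hπ).ne_zero
  refine Set.not_infinite.mp fun hinf => ?_
  obtain ⟨m₁, -, u₁, hu₁, rfl⟩ := hinf.nonempty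
  obtain ⟨m₂, ⟨-, u₂, hu₂, rfl⟩, hm⟩ := hinf.exists_gt
    (m₁ + (v.num.natDegree + v.denom.natDegree + ∑ π ∈ S, π.natDegree))
  set k := m₂ - m₁
  have hk : k ≠ 0 := by omega
  have hn : ((p ^ k - 1 : ℕ) : F) ≠ 0 := by simp [CharP.natCast_pow_sub_one hp.ne_zero hk]
  have hexp : p ^ m₂ = p ^ m₁ + p ^ m₁ * (p ^ k - 1) := by
    rw [← mul_one_add, Nat.add_sub_cancel' (Nat.one_le_pow _ _ hp.pos), ← pow_add]
    congr 1
    omega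
  have hunit := IsSUnit.sub_one_of_mem_of_mul_mem hS₀ hA hdiff
    (RatFunc.pow_ne_one hvnc (mul_ne_zero (pow_ne_zero _ hp.ne_zero)
      (Nat.sub_ne_zero_of_lt (Nat.one_lt_pow hk hp.one_lt))))
    hu₁ (by rwa [mul_assoc, ← pow_add, ← hexp])
  have hlt := RatFunc.lt_natDegree_num_add_natDegree_denom_add_sum_of_isSUnit p hS₀ hvnc hn hunit
  have hk_lt : k < p ^ k := Nat.lt_pow_self hp.one_lt
  omega

/-- In characteristic `p > 0`, let `A ⊆ F(T)` be a set of `S`-units whose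
pairwise differences are `S`-units, `u₀ ∈ A`, and let `v` be a nonconstant `S`-unit with
`1 - v` also an `S`-unit (so `(v, 1-v)` is a nonconstant `S`-unit solution of `X + Y = 1`).
Then the set of exponents `m ≥ 1` such that `v^{p^m} = u/u₀` for some `u ∈ A` is finite. -/
theorem stmt17 {F : Type*} [Field F] [PerfectField F]
    (p : ℕ) [Fact p.Prime] [CharP F p]
    (S : Finset (Polynomial F)) (hS : ∀ π ∈ S, Irreducible π)
    (A : Set (RatFunc F)) (hA : ∀ u ∈ A, IsSUnit S u)
    (hdiff : ∀ u ∈ A, ∀ v ∈ A, u ≠ v → IsSUnit S (u - v))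
    (u₀ : RatFunc F) (hu₀ : u₀ ∈ A)
    (v : RatFunc F) (hvnc : ¬ ∃ c : F, v = RatFunc.C c)
    (hvS : IsSUnit S v) (h1v : IsSUnit S (1 - v)) :
    {m : ℕ | 1 ≤ m ∧ ∃ u ∈ A, u = u₀ * v ^ (p ^ m)}.Finite :=
  stmt17_general p S hS A hA hdiff u₀ v hvnc
end
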